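/- arXiv:2601.20132 — 4 statements merged into one kernel-verified Lean document; each statement's English description precedes it below -/
import Mathlib

section
/- For every a > 0 and every h ∈ ℝ, the Fourier-type integral (1/(2a√π)) ∫_{ℝ} exp(i h x)(-i sign(x)) exp(-x²/(4a²)) dx equals exp(-a² h²) erfi(a h), where erfi(z) = (2/√π) ∫₀^z exp(t²) dt is the imaginary error function. -/
/-!
Pairing `x` with `-x` turns `-i sign(x) e^{ihx}` into `2 sin(hx)`, so the integral is `2 F(h)` with
`F(h) = ∫₀^∞ sin(hx) e^{-bx²} dx` and `b = 1/(4a²)`. Differentiating under the integral sign and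
integrating by parts gives the linear ODE `F' = (1 - hF)/(2b)`, `F(0) = 0`, which the integrating
factor `e^{h²/(4b)}` solves as `F(h) = 2a e^{-a²h²} ∫₀^{ah} e^{t²} dt`.
-/

open MeasureTheory

/-- The imaginary error function `erfi(z) = (2/√π) ∫₀^z exp(t²) dt`. -/
noncomputable def erfi (z : ℝ) : ℝ :=
  (2 / Real.sqrt Real.pi) * ∫ t in (0:ℝ)..z, Real.exp (t ^ 2)

open Real Set Filter

lemma Real.measurable_sign : Measurable Real.sign :=
  Measurable.ite measurableSet_Iio measurable_const
    (Measurable.ite measurableSet_Ioi measurable_const measurable_const)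

lemma Real.abs_sign_le_one (x : ℝ) : |Real.sign x| ≤ 1 := by
  rcases Real.sign_apply_eq x with hs | hs | hs <;> simp [hs]

lemma integral_cexp_mul_sign_of_even {g : ℝ → ℝ} (hg : Integrable g)
    (hg_even : ∀ x, g (-x) = g x) (h : ℝ) :
    ∫ x : ℝ, Complex.exp (Complex.I * h * x) * (-Complex.I * (Real.sign x : ℂ)) *
        (g x : ℂ) = ((2 * ∫ x in Ioi 0, sin (h * x) * g x : ℝ) : ℂ) := by
  set f : ℝ → ℂ := fun x =>
    Complex.exp (Complex.I * h * x) * (-Complex.I * (Real.sign x : ℂ)) * (g x : ℂ)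
  have hf : Integrable f := by
    refine hg.ofReal.bdd_mul (c := 1) ?_ (ae_of_all _ fun x => ?_)
    · exact ((by fun_prop : Measurable fun x : ℝ => Complex.exp (Complex.I * h * x)).mul
        (measurable_sign.complex_ofReal.const_mul _)).aestronglyMeasurable
    · simpa [Complex.norm_exp] using Real.abs_sign_le_one x
  have hsum : ∀ x ∈ Ioi (0 : ℝ), f (-x) + f x = ((2 * (sin (h * x) * g x) : ℝ) : ℂ) := by
    intro x hx
    have h2sin := Complex.two_sin (h * x)
    simp only [f, hg_even, Real.sign_neg, Real.sign_of_pos hx]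
    push_cast
    rw [show Complex.I * h * -x = -(h * x) * Complex.I by ring,
      show Complex.I * h * x = h * x * Complex.I by ring]
    linear_combination -(g x : ℂ) * h2sin
  calc ∫ x, f x = (∫ x in Ioi 0, f (-x)) + ∫ x in Ioi 0, f x := by
        rw [integral_comp_neg_Ioi, neg_zero, ← compl_Ioi, add_comm,
          integral_add_compl measurableSet_Ioi hf]
    _ = ∫ x in Ioi 0, ((2 * (sin (h * x) * g x) : ℝ) : ℂ) := by
        rw [← integral_add hf.comp_neg.integrableOn hf.integrableOn]
        exact setIntegral_congr_fun measurableSet_Ioi hsum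
    _ = _ := by rw [integral_complex_ofReal, integral_const_mul]

section SinGaussian

variable {b : ℝ}

noncomputable def sinGaussianIntegral (b h : ℝ) : ℝ :=
  ∫ x in Ioi 0, sin (h * x) * exp (-b * x ^ 2)

lemma integrable_sin_mul_exp_neg_mul_sq (hb : 0 < b) (h : ℝ) :
    Integrable fun x : ℝ => sin (h * x) * exp (-b * x ^ 2) :=
  (integrable_exp_neg_mul_sq hb).bdd_mul (by fun_prop)
    (ae_of_all _ fun x => by simpa using abs_sin_le_one (h * x))

lemma integrable_cos_mul_exp_neg_mul_sq (hb : 0 < b) (h : ℝ) :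
    Integrable fun x : ℝ => cos (h * x) * exp (-b * x ^ 2) :=
  (integrable_exp_neg_mul_sq hb).bdd_mul (by fun_prop)
    (ae_of_all _ fun x => by simpa using abs_cos_le_one (h * x))

lemma integrable_cos_mul_mul_exp_neg_mul_sq (hb : 0 < b) (h : ℝ) :
    Integrable fun x : ℝ => cos (h * x) * (x * exp (-b * x ^ 2)) :=
  (integrable_mul_exp_neg_mul_sq hb).bdd_mul (by fun_prop)
    (ae_of_all _ fun x => by simpa using abs_cos_le_one (h * x))

lemma integral_cos_mul_mul_exp_neg_mul_sq (hb : 0 < b) (h : ℝ) :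
    ∫ x in Ioi 0, cos (h * x) * (x * exp (-b * x ^ 2)) =
      (1 - h * sinGaussianIntegral b h) / (2 * b) := by
  set ψ : ℝ → ℝ := fun x => cos (h * x) * exp (-b * x ^ 2)
  set ψ' : ℝ → ℝ := fun x => -h * (sin (h * x) * exp (-b * x ^ 2)) -
    2 * b * (cos (h * x) * (x * exp (-b * x ^ 2)))
  have hψ : ∀ x ∈ Ioi (0 : ℝ), HasDerivAt ψ (ψ' x) x := fun x _ =>
    (((hasDerivAt_id' x).const_mul h).cos.mul ((hasDerivAt_pow 2 x).const_mul (-b)).exp).congr_deriv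
      (by simp only [ψ']; push_cast; ring)
  have hψ'_int : IntegrableOn ψ' (Ioi 0) :=
    (((integrable_sin_mul_exp_neg_mul_sq hb h).const_mul _).sub
      ((integrable_cos_mul_mul_exp_neg_mul_sq hb h).const_mul _)).integrableOn
  have hFTC := integral_Ioi_of_hasDerivAt_of_tendsto
    (by fun_prop : Continuous ψ).continuousWithinAt hψ hψ'_int
    (tendsto_zero_of_hasDerivAt_of_integrableOn_Ioi hψ hψ'_int
      (integrable_cos_mul_exp_neg_mul_sq hb h).integrableOn)
  rw [integral_sub (((integrable_sin_mul_exp_neg_mul_sq hb h).const_mul _).integrableOn)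
    ((integrable_cos_mul_mul_exp_neg_mul_sq hb h).const_mul _).integrableOn,
    integral_const_mul, integral_const_mul] at hFTC
  simp only [ψ, mul_zero, cos_zero, zero_pow two_ne_zero, exp_zero, mul_one] at hFTC
  rw [sinGaussianIntegral, eq_div_iff (by positivity)]
  linarith

lemma hasDerivAt_sinGaussianIntegral (hb : 0 < b) (h : ℝ) :
    HasDerivAt (sinGaussianIntegral b) ((1 - h * sinGaussianIntegral b h) / (2 * b)) h := by
  rw [← integral_cos_mul_mul_exp_neg_mul_sq hb h]
  refine (hasDerivAt_integral_of_dominated_loc_of_deriv_le (x₀ := h)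
    (F := fun k x => sin (k * x) * exp (-b * x ^ 2))
    (F' := fun k x => cos (k * x) * (x * exp (-b * x ^ 2)))
    (bound := fun x => ‖x * exp (-b * x ^ 2)‖) univ_mem
    (Eventually.of_forall fun k =>
      (integrable_sin_mul_exp_neg_mul_sq hb k).aestronglyMeasurable.restrict)
    (integrable_sin_mul_exp_neg_mul_sq hb h).integrableOn
    (integrable_cos_mul_mul_exp_neg_mul_sq hb h).aestronglyMeasurable.restrict
    (ae_of_all _ fun x k _ => ?_) (integrable_mul_exp_neg_mul_sq hb).norm.integrableOn
    (ae_of_all _ fun x k _ => ?_)).2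
  · rw [norm_mul]
    exact mul_le_of_le_one_left (norm_nonneg _) (by simpa using abs_cos_le_one (k * x))
  · exact ((hasDerivAt_mul_const x).sin.mul_const _).congr_deriv (by ring)

end SinGaussian

lemma eq_mul_integral_of_hasDerivAt {y : ℝ → ℝ} {p q : ℝ}
    (hy : ∀ t, HasDerivAt y (p - q * t * y t) t) (hy0 : y 0 = 0) (t : ℝ) :
    y t = p * exp (-(q * t ^ 2 / 2)) * ∫ s in 0..t, exp (q * s ^ 2 / 2) := by
  have hu : ∀ s, HasDerivAt (fun s => exp (q * s ^ 2 / 2) * y s) (p * exp (q * s ^ 2 / 2)) s := by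
    intro s
    exact ((((hasDerivAt_pow 2 s).const_mul q).div_const 2).exp.mul (hy s)).congr_deriv
      (by push_cast; ring)
  have hFTC := intervalIntegral.integral_eq_sub_of_hasDerivAt (a := 0) (b := t) (fun s _ => hu s)
    ((continuous_const.mul (by fun_prop)).intervalIntegrable 0 t)
  rw [intervalIntegral.integral_const_mul, hy0, mul_zero, sub_zero] at hFTC
  rw [mul_right_comm, hFTC, mul_right_comm, ← exp_add, add_neg_cancel, exp_zero, one_mul]

lemma sinGaussianIntegral_inv_four_mul_sq {a : ℝ} (ha : a ≠ 0) (h : ℝ) :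
    sinGaussianIntegral (4 * a ^ 2)⁻¹ h =
      2 * a * exp (-(a ^ 2) * h ^ 2) * ∫ t in 0..a * h, exp (t ^ 2) := by
  have hb : 0 < (4 * a ^ 2)⁻¹ := by positivity
  have hODE := eq_mul_integral_of_hasDerivAt (p := 2 * a ^ 2) (q := 2 * a ^ 2)
    (fun t => (hasDerivAt_sinGaussianIntegral hb t).congr_deriv (by field_simp; ring))
    (by simp [sinGaussianIntegral]) h
  have hsubst :
      ∫ s in 0..h, exp (2 * a ^ 2 * s ^ 2 / 2) = a⁻¹ * ∫ t in 0..a * h, exp (t ^ 2) := by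
    simp_rw [show ∀ s : ℝ, 2 * a ^ 2 * s ^ 2 / 2 = (a * s) ^ 2 by intro s; ring]
    rw [intervalIntegral.integral_comp_mul_left (fun t => exp (t ^ 2)) ha, mul_zero, smul_eq_mul]
  rw [hODE, hsubst]
  field_simp

/-- `(1/(2a√π)) ∫_ℝ e^{ihx}(−i sign x) e^{−x²/(4a²)} dx = e^{−a²h²} erfi(ah)`. -/
theorem stmt4 (a : ℝ) (ha : 0 < a) (h : ℝ) :
    (1 / (2 * (a : ℂ) * (Real.sqrt Real.pi : ℂ))) *
      ∫ x : ℝ, Complex.exp (Complex.I * (h : ℂ) * (x : ℂ)) *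
        (-Complex.I * (Real.sign x : ℂ)) *
        Complex.exp (-(x : ℂ) ^ 2 / (4 * (a : ℂ) ^ 2)) =
    ((Real.exp (-(a ^ 2) * h ^ 2) * erfi (a * h) : ℝ) : ℂ) := by
  have hgauss : ∀ x : ℝ, Complex.exp (-(x : ℂ) ^ 2 / (4 * (a : ℂ) ^ 2)) =
      ((exp (-(4 * a ^ 2)⁻¹ * x ^ 2) : ℝ) : ℂ) := fun x => by
    rw [Complex.ofReal_exp]; push_cast; ring_nf
  simp_rw [hgauss]
  rw [integral_cexp_mul_sign_of_even (integrable_exp_neg_mul_sq (by positivity))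
      (fun x => by rw [neg_sq]) h, ← sinGaussianIntegral,
    sinGaussianIntegral_inv_four_mul_sq ha.ne', erfi]
  have ha' : (a : ℂ) ≠ 0 := by exact_mod_cast ha.ne'
  push_cast
  field_simp
end

section
/- Let a > 0, x̃ ∈ ℝ^d a unit vector, and let g be the Gamma(α, a²) mixing density g(v) = a^{-2α} v^{α-1} exp(-v/a²)/Γ(α) with α = 1. Then ∫₀^∞ exp(-v‖h‖²) erfi(√v ⟨h,x̃⟩) g(v) dv = (a⟨h,x̃⟩) / ((a²‖h‖²+1) √(a²(‖h‖² - ⟨h,x̃⟩²) + 1)) for all h ∈ ℝ^d. -/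
open MeasureTheory Filter Set Real Topology

noncomputable def Eg (z : ℝ) : ℝ := ∫ t in (0:ℝ)..z, Real.exp (-t ^ 2)

lemma contExp : Continuous fun t : ℝ => Real.exp (t ^ 2) :=
  Real.continuous_exp.comp (continuous_pow 2)

lemma contExpNeg : Continuous fun t : ℝ => Real.exp (-t ^ 2) :=
  Real.continuous_exp.comp ((continuous_pow 2).neg)

lemma erfi_hasDerivAt (z : ℝ) :
    HasDerivAt erfi (2 / Real.sqrt Real.pi * Real.exp (z ^ 2)) z := by
  exact (intervalIntegral.integral_hasDerivAt_right (contExp.intervalIntegrable _ _)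
    (contExp.stronglyMeasurableAtFilter _ _) contExp.continuousAt).const_mul _

lemma Eg_hasDerivAt (z : ℝ) : HasDerivAt Eg (Real.exp (-z ^ 2)) z :=
  intervalIntegral.integral_hasDerivAt_right (contExpNeg.intervalIntegrable _ _)
    (contExpNeg.stronglyMeasurableAtFilter _ _) contExpNeg.continuousAt

lemma erfi_continuous : Continuous erfi :=
  continuous_iff_continuousAt.2 fun z => (erfi_hasDerivAt z).continuousAt

lemma Eg_continuous : Continuous Eg :=
  continuous_iff_continuousAt.2 fun z => (Eg_hasDerivAt z).continuousAt

lemma erfi_zero : erfi 0 = 0 := by simp [erfi]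

lemma Eg_zero : Eg 0 = 0 := by simp [Eg]

lemma erfi_nonneg {z : ℝ} (hz : 0 ≤ z) : 0 ≤ erfi z :=
  mul_nonneg (by positivity) (intervalIntegral.integral_nonneg hz fun t _ => (Real.exp_pos _).le)

lemma erfi_le {z : ℝ} (hz : 0 ≤ z) :
    erfi z ≤ 2 / Real.sqrt Real.pi * (z * Real.exp (z ^ 2)) := by
  have h1 : (∫ t in (0:ℝ)..z, Real.exp (t ^ 2)) ≤ ∫ _t in (0:ℝ)..z, Real.exp (z ^ 2) := by
    apply intervalIntegral.integral_mono_on hz (contExp.intervalIntegrable _ _)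
      intervalIntegrable_const
    intro t ht
    exact Real.exp_le_exp.2 (by nlinarith [ht.1, ht.2])
  have h2 : (∫ _t in (0:ℝ)..z, Real.exp (z ^ 2)) = z * Real.exp (z ^ 2) := by
    simp
  calc erfi z ≤ 2 / Real.sqrt Real.pi * (∫ _t in (0:ℝ)..z, Real.exp (z ^ 2)) := by
        exact mul_le_mul_of_nonneg_left h1 (by positivity)
    _ = 2 / Real.sqrt Real.pi * (z * Real.exp (z ^ 2)) := by rw [h2]

lemma erfi_neg (z : ℝ) : erfi (-z) = -erfi z := by
  unfold erfi
  have : (∫ t in (0:ℝ)..(-z), Real.exp (t ^ 2)) = -∫ t in (0:ℝ)..z, Real.exp (t ^ 2) := by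
    rw [intervalIntegral.integral_symm]
    congr 1
    have := intervalIntegral.integral_comp_neg (a := (0:ℝ)) (b := z)
      (f := fun t : ℝ => Real.exp (t ^ 2))
    simpa using this.symm
  rw [this]; ring

lemma Eg_tendsto : Tendsto Eg atTop (𝓝 (Real.sqrt Real.pi / 2)) := by
  have hint : IntegrableOn (fun t : ℝ => Real.exp (-t ^ 2)) (Ioi 0) := by
    have := (integrable_exp_neg_mul_sq (one_pos)).integrableOn (s := Ioi (0:ℝ))
    simpa using this
  have := intervalIntegral_tendsto_integral_Ioi 0 hint tendsto_id
  have hval : (∫ t in Ioi (0:ℝ), Real.exp (-t ^ 2)) = Real.sqrt Real.pi / 2 := by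
    have := integral_gaussian_Ioi 1
    simpa using this
  rw [hval] at this
  exact this

lemma sqrt_tendsto_atTop : Tendsto Real.sqrt atTop atTop := by
  apply tendsto_atTop_atTop.2
  intro b
  refine ⟨max (b ^ 2) 0, fun x hx => ?_⟩
  rcases le_total b 0 with hb | hb
  · exact le_trans hb (Real.sqrt_nonneg x)
  · calc b = Real.sqrt (b ^ 2) := (Real.sqrt_sq hb).symm
      _ ≤ Real.sqrt x := Real.sqrt_le_sqrt (le_trans (le_max_left _ _) hx)

lemma core_nonneg (c lam : ℝ) (hc : 0 ≤ c) (hlt : c ^ 2 < lam) :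
    ∫ v in Set.Ioi (0:ℝ), Real.exp (-lam * v) * erfi (c * Real.sqrt v)
      = c / (lam * Real.sqrt (lam - c ^ 2)) := by
  have hk0 : 0 < lam - c ^ 2 := sub_pos.2 hlt
  have hlam : 0 < lam := lt_of_le_of_lt (sq_nonneg c) hlt
  set k : ℝ := lam - c ^ 2 with hkdef
  have hsk : 0 < Real.sqrt k := Real.sqrt_pos.2 hk0
  have hsp : 0 < Real.sqrt Real.pi := Real.sqrt_pos.2 Real.pi_pos
  set C : ℝ := 2 * c / (lam * Real.sqrt k * Real.sqrt Real.pi) with hCdef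
  set F : ℝ → ℝ := fun v =>
      lam⁻¹ * (-(Real.exp (-lam * v) * erfi (c * Real.sqrt v)))
        + C * Eg (Real.sqrt k * Real.sqrt v) with hFdef
  -- derivative
  have key : ∀ v ∈ Set.Ioi (0:ℝ),
      HasDerivAt F (Real.exp (-lam * v) * erfi (c * Real.sqrt v)) v := by
    intro v hv
    simp only [Set.mem_Ioi] at hv
    have hsv : (0:ℝ) < Real.sqrt v := Real.sqrt_pos.2 hv
    have h1 : HasDerivAt Real.sqrt (1 / (2 * Real.sqrt v)) v := Real.hasDerivAt_sqrt hv.ne'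
    have h2 : HasDerivAt (fun v => c * Real.sqrt v) (c * (1 / (2 * Real.sqrt v))) v :=
      h1.const_mul c
    have h3 : HasDerivAt (fun v => erfi (c * Real.sqrt v))
        ((2 / Real.sqrt Real.pi * Real.exp ((c * Real.sqrt v) ^ 2))
          * (c * (1 / (2 * Real.sqrt v)))) v := (erfi_hasDerivAt _).comp v h2
    have h4 : HasDerivAt (fun v : ℝ => Real.exp (-lam * v))
        (Real.exp (-lam * v) * -lam) v := by
      have := ((hasDerivAt_id v).const_mul (-lam)).exp
      simpa using this
    have h5 := (h4.mul h3).neg.const_mul lam⁻¹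
    have h6 : HasDerivAt (fun v => Eg (Real.sqrt k * Real.sqrt v))
        (Real.exp (-(Real.sqrt k * Real.sqrt v) ^ 2)
          * (Real.sqrt k * (1 / (2 * Real.sqrt v)))) v :=
      (Eg_hasDerivAt _).comp v (h1.const_mul (Real.sqrt k))
    have H := h5.add (h6.const_mul C)
    refine H.congr_deriv ?_
    symm
    have e1 : (c * Real.sqrt v) ^ 2 = c ^ 2 * v := by
      rw [mul_pow, Real.sq_sqrt hv.le]
    have e2 : (Real.sqrt k * Real.sqrt v) ^ 2 = k * v := by
      rw [mul_pow, Real.sq_sqrt hk0.le, Real.sq_sqrt hv.le]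
    rw [e1, e2]
    have e3 : Real.exp (-(lam * v)) * Real.exp (c ^ 2 * v) = Real.exp (-(k * v)) := by
      rw [← Real.exp_add]; congr 1; rw [hkdef]; ring
    have hspne := hsp.ne'
    have hskne := hsk.ne'
    have hsvne := hsv.ne'
    have hlamne := hlam.ne'
    rw [hCdef]
    field_simp
    have e3' : Real.exp (-(lam * v)) * Real.exp (v * c ^ 2) = Real.exp (-(v * k)) := by
      rw [mul_comm v (c ^ 2), mul_comm v k]; exact e3
    linear_combination c * e3'
  have hpos : ∀ v ∈ Set.Ioi (0:ℝ), 0 ≤ Real.exp (-lam * v) * erfi (c * Real.sqrt v) :=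
    fun v _ => mul_nonneg (Real.exp_pos _).le (erfi_nonneg (mul_nonneg hc (Real.sqrt_nonneg _)))
  have hcontF : ContinuousWithinAt F (Set.Ici 0) 0 := by
    have : Continuous F := by
      apply Continuous.add
      · exact continuous_const.mul
          (((Real.continuous_exp.comp (continuous_const.mul continuous_id)).mul
            (erfi_continuous.comp (continuous_const.mul Real.continuous_sqrt))).neg)
      · exact continuous_const.mul (Eg_continuous.comp (continuous_const.mul Real.continuous_sqrt))
    exact this.continuousWithinAt
  have hT2 : Tendsto (fun v => C * Eg (Real.sqrt k * Real.sqrt v)) atTop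
      (𝓝 (C * (Real.sqrt Real.pi / 2))) :=
    (Eg_tendsto.comp (Tendsto.const_mul_atTop hsk sqrt_tendsto_atTop)).const_mul C
  have hgz : Tendsto (fun v : ℝ =>
      (2 * c / (lam * Real.sqrt Real.pi)) * (v * Real.exp (-(k * v)))) atTop (𝓝 0) := by
    have h1 := tendsto_pow_mul_exp_neg_atTop_nhds_zero 1
    have h2 := h1.comp (Tendsto.const_mul_atTop hk0 tendsto_id)
    have h3 := h2.const_mul (k⁻¹)
    have h4 : Tendsto (fun v : ℝ => v * Real.exp (-(k * v))) atTop (𝓝 0) := by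
      rw [mul_zero] at h3
      refine h3.congr fun v => ?_
      simp only [Function.comp, id, pow_one]
      field_simp
    simpa using h4.const_mul (2 * c / (lam * Real.sqrt Real.pi))
  have hT1 : Tendsto (fun v =>
      lam⁻¹ * (-(Real.exp (-lam * v) * erfi (c * Real.sqrt v)))) atTop (𝓝 0) := by
    apply squeeze_zero_norm' _ hgz
    filter_upwards [Filter.eventually_ge_atTop (1:ℝ)] with v hv1
    have hv0 : (0:ℝ) ≤ v := le_trans zero_le_one hv1
    have hsqv : Real.sqrt v ≤ v := by
      have hh := Real.sqrt_le_sqrt (show v ≤ v ^ 2 by nlinarith)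
      rwa [Real.sqrt_sq hv0] at hh
    have hX : 0 ≤ Real.exp (-lam * v) * erfi (c * Real.sqrt v) :=
      mul_nonneg (Real.exp_pos _).le (erfi_nonneg (mul_nonneg hc (Real.sqrt_nonneg _)))
    have hnorm : ‖lam⁻¹ * (-(Real.exp (-lam * v) * erfi (c * Real.sqrt v)))‖
        = lam⁻¹ * (Real.exp (-lam * v) * erfi (c * Real.sqrt v)) := by
      rw [norm_mul, norm_neg, Real.norm_eq_abs, Real.norm_eq_abs,
        abs_of_nonneg (inv_nonneg.2 hlam.le), abs_of_nonneg hX]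
    rw [hnorm]
    have hE := erfi_le (mul_nonneg hc (Real.sqrt_nonneg v))
    have e1 : (c * Real.sqrt v) ^ 2 = c ^ 2 * v := by
      rw [mul_pow, Real.sq_sqrt hv0]
    rw [e1] at hE
    have e3 : Real.exp (-lam * v) * Real.exp (c ^ 2 * v) = Real.exp (-(k * v)) := by
      rw [← Real.exp_add]; congr 1; rw [hkdef]; ring
    calc lam⁻¹ * (Real.exp (-lam * v) * erfi (c * Real.sqrt v))
        ≤ lam⁻¹ * (Real.exp (-lam * v)
            * (2 / Real.sqrt Real.pi * (c * Real.sqrt v * Real.exp (c ^ 2 * v)))) := by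
          apply mul_le_mul_of_nonneg_left _ (inv_nonneg.2 hlam.le)
          exact mul_le_mul_of_nonneg_left hE (Real.exp_pos _).le
      _ = (2 * c / (lam * Real.sqrt Real.pi)) * (Real.sqrt v * Real.exp (-(k * v))) := by
          rw [← e3]; field_simp
      _ ≤ (2 * c / (lam * Real.sqrt Real.pi)) * (v * Real.exp (-(k * v))) := by
          apply mul_le_mul_of_nonneg_left _ (by positivity)
          exact mul_le_mul_of_nonneg_right hsqv (Real.exp_pos _).le
  have htend : Tendsto F atTop (𝓝 (0 + C * (Real.sqrt Real.pi / 2))) := hT1.add hT2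
  have hint := integrableOn_Ioi_deriv_of_nonneg hcontF key hpos htend
  rw [integral_Ioi_of_hasDerivAt_of_tendsto hcontF key hint htend]
  have hF0 : F 0 = 0 := by
    simp [hFdef, Real.sqrt_zero, erfi_zero, Eg_zero]
  rw [hF0, hCdef]
  have hspne := hsp.ne'
  have hskne := hsk.ne'
  field_simp
  ring

lemma core (c lam : ℝ) (hlt : c ^ 2 < lam) :
    ∫ v in Set.Ioi (0:ℝ), Real.exp (-lam * v) * erfi (c * Real.sqrt v)
      = c / (lam * Real.sqrt (lam - c ^ 2)) := by
  rcases le_total 0 c with hc | hc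
  · exact core_nonneg c lam hc hlt
  · have hc' : 0 ≤ -c := neg_nonneg.2 hc
    have hlt' : (-c) ^ 2 < lam := by simpa using hlt
    have h0 := core_nonneg (-c) lam hc' hlt'
    have h1 : ∀ v : ℝ, Real.exp (-lam * v) * erfi (c * Real.sqrt v)
        = -(Real.exp (-lam * v) * erfi (-c * Real.sqrt v)) := by
      intro v
      rw [show c * Real.sqrt v = -(-c * Real.sqrt v) by ring, erfi_neg]
      ring
    calc ∫ v in Set.Ioi (0:ℝ), Real.exp (-lam * v) * erfi (c * Real.sqrt v)
        = ∫ v in Set.Ioi (0:ℝ), -(Real.exp (-lam * v) * erfi (-c * Real.sqrt v)) := by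
          simp_rw [h1]
      _ = -∫ v in Set.Ioi (0:ℝ), Real.exp (-lam * v) * erfi (-c * Real.sqrt v) :=
          integral_neg _
      _ = -((-c) / (lam * Real.sqrt (lam - (-c) ^ 2))) := by rw [h0]
      _ = c / (lam * Real.sqrt (lam - c ^ 2)) := by rw [neg_sq]; ring

/-- Cauchy (α = 1) asymmetric cross-covariance: mixing the Gaussian
asymmetric part against the Gamma(1, a²) density `g(v) = a⁻² e^{−v/a²}` gives
`a⟨h,xt⟩ / ((a²‖h‖²+1)√(a²(‖h‖²−⟨h,xt⟩²)+1))`. -/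
theorem stmt8 (d : ℕ) (a : ℝ) (ha : 0 < a)
    (xt : EuclideanSpace ℝ (Fin d)) (hxt : ‖xt‖ = 1) (h : EuclideanSpace ℝ (Fin d)) :
    ∫ v in Set.Ioi (0:ℝ),
        Real.exp (-v * ‖h‖ ^ 2) * erfi (Real.sqrt v * (inner ℝ h xt : ℝ)) *
          ((a ^ 2)⁻¹ * Real.exp (-v / a ^ 2)) =
    (a * (inner ℝ h xt : ℝ)) /
      ((a ^ 2 * ‖h‖ ^ 2 + 1) *
        Real.sqrt (a ^ 2 * (‖h‖ ^ 2 - (inner ℝ h xt : ℝ) ^ 2) + 1)) := by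
  set c : ℝ := (inner ℝ h xt : ℝ) with hcdef
  have ha2 : (0:ℝ) < a ^ 2 := by positivity
  have hcs : c ^ 2 ≤ ‖h‖ ^ 2 := by
    have h1 : |c| ≤ ‖h‖ * ‖xt‖ := abs_real_inner_le_norm h xt
    rw [hxt, mul_one] at h1
    calc c ^ 2 = |c| ^ 2 := (sq_abs c).symm
      _ ≤ ‖h‖ ^ 2 := by nlinarith [abs_nonneg c, norm_nonneg h]
  set lam : ℝ := ‖h‖ ^ 2 + (a ^ 2)⁻¹ with hlamdef
  have hlt : c ^ 2 < lam := by
    rw [hlamdef]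
    have : (0:ℝ) < (a ^ 2)⁻¹ := by positivity
    linarith
  have hrw : ∀ v : ℝ,
      Real.exp (-v * ‖h‖ ^ 2) * erfi (Real.sqrt v * c) * ((a ^ 2)⁻¹ * Real.exp (-v / a ^ 2))
        = (a ^ 2)⁻¹ * (Real.exp (-lam * v) * erfi (c * Real.sqrt v)) := by
    intro v
    rw [mul_comm (Real.sqrt v) c,
      show -lam * v = -v * ‖h‖ ^ 2 + -v / a ^ 2 by rw [hlamdef]; field_simp; ring,
      Real.exp_add]
    ring
  simp_rw [hrw]
  rw [MeasureTheory.integral_const_mul, core c lam hlt]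
  have hd : (0:ℝ) < a ^ 2 * (‖h‖ ^ 2 - c ^ 2) + 1 := by nlinarith
  have e : lam - c ^ 2 = (a ^ 2 * (‖h‖ ^ 2 - c ^ 2) + 1) / a ^ 2 := by
    rw [hlamdef]; field_simp; ring
  rw [e, Real.sqrt_div hd.le, Real.sqrt_sq ha.le]
  have h1 : (0:ℝ) < Real.sqrt (a ^ 2 * (‖h‖ ^ 2 - c ^ 2) + 1) := Real.sqrt_pos.2 hd
  have h2 : (0:ℝ) < a ^ 2 * ‖h‖ ^ 2 + 1 := by positivity
  have hlampos : (0:ℝ) < lam := lt_of_le_of_lt (sq_nonneg c) hlt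
  rw [hlamdef]
  field_simp
end

section
/- With the Gamma mixing density g(v) = a^{-2α} Γ(α)^{-1} v^{α-1} exp(-v/a²) with α = 1/2, one has ∫₀^∞ exp(-v‖h‖²) erfi(√v⟨h,x̃⟩) g(v) dv = (a²‖h‖²+1)^{-1/2} (2/π) artanh( a⟨h,x̃⟩ / √(a²‖h‖²+1) ) for every h ∈ ℝ^d and unit vector x̃ ∈ ℝ^d. -/
/-! With `c = ⟪h, xt⟫`, substituting `t = √v s` gives
`erfi (√v c) = (2/√π) √v ∫₀^c exp (v s²) ds`, so the factor `v^(-1/2)` of the Gamma(1/2) density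
cancels and the integrand becomes `(2/(aπ)) exp (-β v) ∫₀^c exp (v s²) ds` with
`β = ‖h‖² + a⁻²`. Since `s² ≤ c² < β` on the range of `s`, Fubini applies, the `v`-integral is
`(β - s²)⁻¹`, and `∫₀^c (β - s²)⁻¹ ds = β^(-1/2) artanh (c/√β)`. -/

open MeasureTheory

/-- The inverse hyperbolic tangent `artanh(x) = (1/2) log((1+x)/(1−x))`. -/
noncomputable def artanh (x : ℝ) : ℝ := (1/2) * Real.log ((1 + x) / (1 - x))

-- Only notation: `open Real` would make `artanh` ambiguous with `Real.artanh`.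
open Set
open scoped Real

lemma artanh_zero : artanh 0 = 0 := by simp [artanh]

lemma hasDerivAt_artanh {x : ℝ} (hx : |x| < 1) : HasDerivAt artanh (1 - x ^ 2)⁻¹ x := by
  obtain ⟨hx₁, hx₂⟩ := abs_lt.mp hx
  unfold artanh
  have hquot : HasDerivAt (fun y : ℝ => (1 + y) / (1 - y))
      ((1 * (1 - x) - (1 + x) * (-1)) / (1 - x) ^ 2) x :=
    ((hasDerivAt_id x).const_add 1).div ((hasDerivAt_id x).const_sub 1) (by linarith)
  refine ((hquot.log (div_pos (by linarith) (by linarith)).ne').const_mul (1 / 2)).congr_deriv ?_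
  have : 1 - x ^ 2 ≠ 0 := by nlinarith
  have : 1 - x ≠ 0 := by linarith
  have : 1 + x ≠ 0 := by linarith
  field_simp
  ring

lemma sq_le_sq_of_mem_uIcc_zero {c s : ℝ} (hs : s ∈ uIcc 0 c) : s ^ 2 ≤ c ^ 2 := by
  rcases le_total 0 c with hc | hc
  · rw [uIcc_of_le hc] at hs
    nlinarith [hs.1, hs.2]
  · rw [uIcc_of_ge hc] at hs
    nlinarith [hs.1, hs.2]

lemma integral_inv_sub_sq {β c : ℝ} (hc : c ^ 2 < β) :
    ∫ s in 0..c, (β - s ^ 2)⁻¹ = (√β)⁻¹ * artanh (c / √β) := by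
  have hβ : 0 < √β := Real.sqrt_pos.mpr ((sq_nonneg c).trans_lt hc)
  have hβsq : √β ^ 2 = β := Real.sq_sqrt ((sq_nonneg c).trans hc.le)
  have hlt : ∀ s ∈ uIcc 0 c, s ^ 2 < β := fun s hs => (sq_le_sq_of_mem_uIcc_zero hs).trans_lt hc
  have hderiv : ∀ s ∈ uIcc 0 c,
      HasDerivAt (fun s => (√β)⁻¹ * artanh (s / √β)) (β - s ^ 2)⁻¹ s := by
    intro s hs
    have habs : |s / √β| < 1 := by
      rw [abs_div, abs_of_pos hβ, div_lt_one hβ, ← Real.sqrt_sq_eq_abs]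
      exact Real.sqrt_lt_sqrt (sq_nonneg s) (hlt s hs)
    have := ((hasDerivAt_artanh habs).comp s ((hasDerivAt_id s).div_const √β)).const_mul (√β)⁻¹
    refine this.congr_deriv ?_
    have : β - s ^ 2 ≠ 0 := (sub_pos.mpr (hlt s hs)).ne'
    field_simp
    rw [hβsq]
    exact div_self this
  have hcont : IntervalIntegrable (fun s => (β - s ^ 2)⁻¹) volume 0 c :=
    (ContinuousOn.inv₀ (by fun_prop) fun s hs => (sub_pos.mpr (hlt s hs)).ne').intervalIntegrable
  rw [intervalIntegral.integral_eq_sub_of_hasDerivAt hderiv hcont]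
  simp [artanh_zero]

lemma integral_exp_neg_mul_mul_integral_exp_mul_sq {β c : ℝ} (hc : c ^ 2 < β) :
    ∫ v in Ioi 0, Real.exp (-β * v) * ∫ s in 0..c, Real.exp (v * s ^ 2)
      = (√β)⁻¹ * artanh (c / √β) := by
  have hexp : ∀ v, Real.exp (-β * v) * ∫ s in 0..c, Real.exp (v * s ^ 2)
      = ∫ s in 0..c, Real.exp ((s ^ 2 - β) * v) := fun v => by
    rw [← intervalIntegral.integral_const_mul]
    congr 1 with s
    rw [← Real.exp_add]
    ring_nf
  have hint : Integrable (Function.uncurry fun s v => Real.exp ((s ^ 2 - β) * v))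
      ((volume.restrict (uIoc 0 c)).prod (volume.restrict (Ioi 0))) := by
    have : IsFiniteMeasure (volume.restrict (uIoc 0 c)) := by unfold uIoc; infer_instance
    have hdom : Integrable (fun p : ℝ × ℝ => 1 * Real.exp ((c ^ 2 - β) * p.2))
        ((volume.restrict (uIoc 0 c)).prod (volume.restrict (Ioi 0))) :=
      (integrable_const 1).mul_prod (integrableOn_exp_mul_Ioi (by linarith) 0)
    refine hdom.mono' (by fun_prop) ?_
    rw [Measure.prod_restrict]
    refine ae_restrict_of_forall_mem (measurableSet_uIoc.prod measurableSet_Ioi) ?_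
    rintro ⟨s, v⟩ ⟨hs, hv : 0 < v⟩
    have := sq_le_sq_of_mem_uIcc_zero (uIoc_subset_uIcc hs)
    rw [Function.uncurry_apply_pair, Real.norm_eq_abs, Real.abs_exp, one_mul, Real.exp_le_exp]
    nlinarith
  calc _ = ∫ v in Ioi 0, ∫ s in 0..c, Real.exp ((s ^ 2 - β) * v) := by simp_rw [hexp]
    _ = ∫ s in 0..c, ∫ v in Ioi 0, Real.exp ((s ^ 2 - β) * v) :=
      (intervalIntegral_integral_swap hint).symm
    _ = ∫ s in 0..c, (β - s ^ 2)⁻¹ := intervalIntegral.integral_congr fun s hs => by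
      have := (sq_le_sq_of_mem_uIcc_zero hs).trans_lt hc
      rw [integral_exp_mul_Ioi (by linarith), mul_zero, Real.exp_zero, neg_div, ← div_neg,
        neg_sub, one_div]
    _ = _ := integral_inv_sub_sq hc

lemma erfi_sqrt_mul {v : ℝ} (hv : 0 < v) (c : ℝ) :
    erfi (√v * c) = 2 / √π * √v * ∫ s in 0..c, Real.exp (v * s ^ 2) := by
  have hsv : 0 < √v := Real.sqrt_pos.mpr hv
  have : 0 < √π := Real.sqrt_pos.mpr Real.pi_pos
  have hsq : ∀ s, Real.exp (v * s ^ 2) = Real.exp ((√v * s) ^ 2) := fun s => by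
    rw [mul_pow, Real.sq_sqrt hv.le]
  simp_rw [erfi, hsq, intervalIntegral.integral_comp_mul_left (fun t => Real.exp (t ^ 2)) hsv.ne',
    mul_zero, smul_eq_mul]
  field_simp

theorem integral_exp_mul_erfi_mul_gammaHalf_density {a n c : ℝ} (ha : 0 < a)
    (hc : c ^ 2 < n + (a ^ 2)⁻¹) :
    ∫ v in Ioi 0, Real.exp (-v * n) * erfi (√v * c) *
        (a⁻¹ * (√π)⁻¹ * v ^ (-(1:ℝ)/2) * Real.exp (-v / a ^ 2))
      = (√(a ^ 2 * n + 1))⁻¹ * (2 / π) * artanh (a * c / √(a ^ 2 * n + 1)) := by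
  have hintegrand : ∀ v ∈ Ioi (0:ℝ), Real.exp (-v * n) * erfi (√v * c) *
        (a⁻¹ * (√π)⁻¹ * v ^ (-(1:ℝ)/2) * Real.exp (-v / a ^ 2))
      = 2 / (a * π) * (Real.exp (-(n + (a ^ 2)⁻¹) * v) * ∫ s in 0..c, Real.exp (v * s ^ 2)) := by
    intro v (hv : 0 < v)
    have hrpow : v ^ (-(1:ℝ)/2) = (√v)⁻¹ := by
      rw [neg_div, Real.rpow_neg hv.le, Real.sqrt_eq_rpow, one_div]
    have hexp : Real.exp (-(n + (a ^ 2)⁻¹) * v) = Real.exp (-v * n) * Real.exp (-v / a ^ 2) := by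
      rw [← Real.exp_add]
      ring_nf
    have : 0 < √v := Real.sqrt_pos.mpr hv
    rw [erfi_sqrt_mul hv, hrpow, hexp]
    field_simp
    rw [Real.sq_sqrt Real.pi_pos.le]
    ring
  have hβ : n + (a ^ 2)⁻¹ = (a ^ 2 * n + 1) / a ^ 2 := by field_simp
  have hX : 0 < a ^ 2 * n + 1 := by
    have := (sq_nonneg c).trans_lt hc
    rw [hβ] at this
    exact (div_pos_iff_of_pos_right (by positivity)).mp this
  have hsqrtβ : √(n + (a ^ 2)⁻¹) = √(a ^ 2 * n + 1) / a := by
    rw [hβ, Real.sqrt_div hX.le, Real.sqrt_sq ha.le]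
  rw [setIntegral_congr_fun measurableSet_Ioi hintegrand, MeasureTheory.integral_const_mul,
    integral_exp_neg_mul_mul_integral_exp_mul_sq hc, hsqrtβ]
  field_simp

/-- Cauchy (α = 1/2) asymmetric cross-covariance: mixing the Gaussian
asymmetric part against the Gamma(1/2, a²) density
`g(v) = a⁻¹ Γ(1/2)⁻¹ v^{−1/2} e^{−v/a²}` (with `Γ(1/2) = √π`) gives
`(a²‖h‖²+1)^{−1/2} (2/π) artanh(a⟨h,xt⟩/√(a²‖h‖²+1))`. -/
theorem stmt9 (d : ℕ) (a : ℝ) (ha : 0 < a)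
    (xt : EuclideanSpace ℝ (Fin d)) (hxt : ‖xt‖ = 1) (h : EuclideanSpace ℝ (Fin d)) :
    ∫ v in Set.Ioi (0:ℝ),
        Real.exp (-v * ‖h‖ ^ 2) * erfi (Real.sqrt v * (inner ℝ h xt : ℝ)) *
          (a⁻¹ * (Real.sqrt Real.pi)⁻¹ * v ^ (-(1:ℝ)/2) * Real.exp (-v / a ^ 2)) =
    (Real.sqrt (a ^ 2 * ‖h‖ ^ 2 + 1))⁻¹ * (2 / Real.pi) *
      artanh (a * (inner ℝ h xt : ℝ) / Real.sqrt (a ^ 2 * ‖h‖ ^ 2 + 1)) := by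
  refine integral_exp_mul_erfi_mul_gammaHalf_density ha ?_
  have hcs : |inner ℝ h xt| ≤ ‖h‖ := by simpa [hxt] using abs_real_inner_le_norm h xt
  calc inner ℝ h xt ^ 2 ≤ ‖h‖ ^ 2 := sq_le_sq.mpr (by rwa [abs_norm])
    _ < ‖h‖ ^ 2 + (a ^ 2)⁻¹ := lt_add_of_pos_right _ (by positivity)
end

section
/- The spectral density of the Gneiting squared-exponential space-time covariance C(h,u) = (a_t²u²+1)^{-d/2} exp(-a_s²‖h‖²/(a_t²u²+1)) on ℝ^d × ℝ is f*(‖x‖,|η|) = a_s (2√π a_s)^{-d} (√π a_t ‖x‖)^{-1} exp(-‖x‖²/(4a_s²) - a_s²η²/(a_t²‖x‖²)); that is, (2π)^{-(d+1)} ∫_ℝ ∫_{ℝ^d} exp(-i⟨h,x⟩ - iηu) C(h,u) dh du equals this expression for all x ≠ 0 and η ∈ ℝ. -/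
/-!
For fixed time lag `u`, the covariance is a Gaussian in `h` of precision `a_s² / (a_t²u² + 1)`;
its Fourier transform at `x` cancels the prefactor `(a_t²u² + 1)^{-d/2}` and leaves
`exp(-‖x‖²/(4a_s²)) · exp(-c u²)` with `c = a_t²‖x‖²/(4a_s²)`, a Gaussian in `u`. Its Fourier
transform at `η` is `√(π/c) · exp(-η²/(4c))`, and collecting constants gives the density.
-/

open MeasureTheory Real Complex

section Gaussian

variable {V : Type*} [NormedAddCommGroup V] [InnerProductSpace ℝ V] [FiniteDimensional ℝ V]
  [MeasurableSpace V] [BorelSpace V]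

theorem integral_cexp_neg_I_inner_mul_rexp_neg_mul_sq_norm {b : ℝ} (hb : 0 < b) (x : V) :
    ∫ v : V, cexp (-I * (inner ℝ v x : ℝ)) * (rexp (-b * ‖v‖ ^ 2) : ℂ) =
      (((π / b) ^ ((Module.finrank ℝ V : ℝ) / 2) * rexp (-‖x‖ ^ 2 / (4 * b)) : ℝ) : ℂ) := by
  have hb' : 0 < (b : ℂ).re := by simpa using hb
  have key := GaussianFourier.integral_cexp_neg_mul_sq_norm_add hb' (-I) x
  convert key using 1
  · congr 1 with v
    rw [real_inner_comm, ofReal_exp, ← Complex.exp_add]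
    push_cast
    ring_nf
  · rw [ofReal_mul, ofReal_exp, ofReal_cpow (by positivity)]
    push_cast
    congr 2
    rw [neg_sq, I_sq]
    ring

/-- The factor in `u` is written as the integrand of
`integral_cexp_neg_I_inner_mul_rexp_neg_mul_sq_norm` on `V = ℝ`, to be integrated by it again. -/
theorem integral_gneiting_space {d : ℕ} (hd : Module.finrank ℝ V = d) {a_s : ℝ} (has : 0 < a_s)
    (a_t : ℝ) (x : V) (η u : ℝ) :
    ∫ h : V, cexp (-I * (inner ℝ h x : ℝ) - I * η * u) *
        ((((a_t ^ 2 * u ^ 2 + 1) ^ ((d : ℝ) / 2))⁻¹ *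
          rexp (-a_s ^ 2 * ‖h‖ ^ 2 / (a_t ^ 2 * u ^ 2 + 1)) : ℝ) : ℂ) =
      (((π / a_s ^ 2) ^ ((d : ℝ) / 2) * rexp (-‖x‖ ^ 2 / (4 * a_s ^ 2)) : ℝ) : ℂ) *
        (cexp (-I * (inner ℝ u η : ℝ)) *
          (rexp (-(a_t ^ 2 * ‖x‖ ^ 2 / (4 * a_s ^ 2)) * ‖u‖ ^ 2) : ℂ)) := by
  set A := a_t ^ 2 * u ^ 2 + 1
  have hA : 0 < A := by positivity
  have hpow : (π / (a_s ^ 2 / A)) ^ ((d : ℝ) / 2) =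
      (π / a_s ^ 2) ^ ((d : ℝ) / 2) * A ^ ((d : ℝ) / 2) := by
    rw [div_div_eq_mul_div, mul_div_right_comm, mul_rpow (by positivity) hA.le]
  have hexp : -‖x‖ ^ 2 / (4 * (a_s ^ 2 / A)) =
      -‖x‖ ^ 2 / (4 * a_s ^ 2) + -(a_t ^ 2 * ‖x‖ ^ 2 / (4 * a_s ^ 2)) * ‖u‖ ^ 2 := by
    rw [Real.norm_eq_abs, sq_abs]
    field_simp
    ring
  have hinner : (inner ℝ u η : ℝ) = η * u := by simp
  calc _ = ∫ h : V, (cexp (-I * η * u) * (((A ^ ((d : ℝ) / 2))⁻¹ : ℝ) : ℂ)) *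
        (cexp (-I * (inner ℝ h x : ℝ)) * (rexp (-(a_s ^ 2 / A) * ‖h‖ ^ 2) : ℂ)) := by
        congr 1 with h
        push_cast
        rw [sub_eq_add_neg, Complex.exp_add]
        ring_nf
    _ = _ := by
      rw [integral_const_mul, integral_cexp_neg_I_inner_mul_rexp_neg_mul_sq_norm (by positivity),
        hd, hpow, hexp, hinner, Real.exp_add]
      have : ((A ^ ((d : ℝ) / 2) : ℝ) : ℂ) ≠ 0 := by exact_mod_cast (rpow_pos_of_pos hA _).ne'
      push_cast
      field_simp

end Gaussian

theorem gneiting_density_eq {a_s a_t r : ℝ} (has : 0 < a_s) (hat : 0 < a_t) (hr : 0 < r)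
    (d : ℕ) (η : ℝ) :
    ((2 * π) ^ (d + 1))⁻¹ * ((π / a_s ^ 2) ^ ((d : ℝ) / 2) * rexp (-r ^ 2 / (4 * a_s ^ 2))) *
        ((π / (a_t ^ 2 * r ^ 2 / (4 * a_s ^ 2))) ^ ((1 : ℝ) / 2) *
          rexp (-η ^ 2 / (4 * (a_t ^ 2 * r ^ 2 / (4 * a_s ^ 2))))) =
      a_s / ((2 * √π * a_s) ^ d * √π * a_t * r) *
        rexp (-r ^ 2 / (4 * a_s ^ 2) - a_s ^ 2 * η ^ 2 / (a_t ^ 2 * r ^ 2)) := by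
  have hπ : √π ^ 2 = π := sq_sqrt pi_nonneg
  have hspace : (π / a_s ^ 2) ^ ((d : ℝ) / 2) = √π ^ d / a_s ^ d := by
    rw [show (d : ℝ) / 2 = 1 / 2 * d by ring, rpow_mul (by positivity), ← sqrt_eq_rpow,
      rpow_natCast, sqrt_div pi_nonneg, sqrt_sq has.le, div_pow]
  have htime : (π / (a_t ^ 2 * r ^ 2 / (4 * a_s ^ 2))) ^ ((1 : ℝ) / 2) =
      2 * √π * a_s / (a_t * r) := by
    rw [← sqrt_eq_rpow, sqrt_eq_iff_eq_sq (by positivity) (by positivity), div_pow, mul_pow,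
      mul_pow, hπ]
    field_simp
    ring
  rw [hspace, htime, sub_eq_add_neg, Real.exp_add]
  have hs : 0 < √π := by positivity
  generalize √π = s at hπ hs ⊢
  rw [← hπ]
  field_simp
  ring

/-- the spectral density of the Gneiting squared-exponential
space-time covariance `C(h,u) = (a_t²u²+1)^{−d/2} exp(−a_s²‖h‖²/(a_t²u²+1))`:
the (d+1)-fold inverse Fourier transform equals
`a_s (2√π a_s)^{−d} (√π a_t ‖x‖)^{−1} exp(−‖x‖²/(4a_s²) − a_s²η²/(a_t²‖x‖²))`. -/
theorem stmt11 (d : ℕ) (a_s a_t : ℝ) (has : 0 < a_s) (hat : 0 < a_t)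
    (x : EuclideanSpace ℝ (Fin d)) (hx : x ≠ 0) (η : ℝ) :
    ((((2 * Real.pi) ^ (d + 1))⁻¹ : ℝ) : ℂ) *
      ∫ u : ℝ, ∫ h : EuclideanSpace ℝ (Fin d),
        Complex.exp (-Complex.I * (((inner ℝ h x : ℝ) : ℝ) : ℂ) - Complex.I * (η : ℂ) * (u : ℂ)) *
          ((((a_t ^ 2 * u ^ 2 + 1) ^ ((d : ℝ) / 2))⁻¹ *
            Real.exp (-a_s ^ 2 * ‖h‖ ^ 2 / (a_t ^ 2 * u ^ 2 + 1)) : ℝ) : ℂ) =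
    (((a_s / ((2 * Real.sqrt Real.pi * a_s) ^ d * Real.sqrt Real.pi * a_t * ‖x‖)) *
      Real.exp (-‖x‖ ^ 2 / (4 * a_s ^ 2) - a_s ^ 2 * η ^ 2 / (a_t ^ 2 * ‖x‖ ^ 2)) : ℝ) : ℂ) := by
  have hx0 : 0 < ‖x‖ := norm_pos_iff.mpr hx
  simp_rw [integral_gneiting_space finrank_euclideanSpace_fin has a_t x η]
  rw [integral_const_mul, integral_cexp_neg_I_inner_mul_rexp_neg_mul_sq_norm (by positivity),
    Module.finrank_self, Nat.cast_one, Real.norm_eq_abs, sq_abs, ← ofReal_mul, ← ofReal_mul,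
    ← mul_assoc, gneiting_density_eq has hat hx0]
end
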